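/- There exists an increasing quasisymmetric homeomorphism f : R → R and a constant c > 0 such that ω_f(Q) ≥ c for every dyadic interval Q with ℓ(Q) ≤ 1. In particular, for quasisymmetric maps of the real line, having big pieces of bi-Lipschitz images in the image does not imply ω_f(x,r)² dx dr/r is a Carleson measure. -/

import Mathlib

/-!
The map is the distribution function `cdf` of the self-similar measure on `ℝ` that, inside every
4-adic interval, gives the four quarters the fractions `1/8, 3/8, 3/8, 1/8` of its mass (a 4-adic
variant of Kahane's measure). Adjacent 4-adic intervals of equal length have comparable masses,
so the measure is doubling and `cdf` is quasisymmetric. On the other hand, on every 4-adic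
interval `cdf` is an affine image of `cdf` on `[0, 1]`, and the averages of `cdf` over the four
quarters of `[0, 1]` are `1/16, 5/16, 11/16, 15/16`, which are not in arithmetic progression. So
`cdf` keeps a fixed relative `L²` distance from all affine maps on every 4-adic interval, and a
dyadic interval of length at most `1` contains a 4-adic interval of at least half its length.
-/

open MeasureTheory Metric Set

/-- The normalized affine approximation number `ω_f(Q)` for `f : ℝ → ℝ`, where affine maps are
`x ↦ p.1 * x + p.2` with nonzero slope `p.1`. -/
noncomputable def omegaI (f : ℝ → ℝ) (Q : Set ℝ) : ℝ :=
  ⨅ A : {p : ℝ × ℝ // p.1 ≠ 0},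
    Real.sqrt (⨍ x in Q, (f x - (A.val.1 * x + A.val.2)) ^ 2 / (|A.val.1| * Metric.diam Q) ^ 2)

open Filter

noncomputable section

section Quasisymmetry

open Real

-- The hypotheses `hR` and `hL` below together are the Beurling–Ahlfors condition with constant `C`.
variable {f : ℝ → ℝ} {C : ℝ}

lemma sub_le_pow_mul_sub (hC : 0 ≤ C)
    (hR : ∀ x h, 0 < h → f (x + h) - f x ≤ C * (f x - f (x - h)))
    (k : ℕ) (x : ℝ) {s : ℝ} (hs : 0 < s) :
    f (x + 2 ^ k * s) - f x ≤ (C + 1) ^ k * (f (x + s) - f x) := by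
  induction k generalizing s with
  | zero => simp
  | succ k ih =>
    have h2 := hR (x + s) s hs
    rw [add_sub_cancel_right, add_assoc, ← two_mul] at h2
    calc f (x + 2 ^ (k + 1) * s) - f x ≤ (C + 1) ^ k * (f (x + 2 * s) - f x) := by
          simpa [pow_succ, mul_assoc] using ih (by positivity : 0 < 2 * s)
      _ ≤ (C + 1) ^ k * ((C + 1) * (f (x + s) - f x)) :=
          mul_le_mul_of_nonneg_left (by linarith) (by positivity)
      _ = (C + 1) ^ (k + 1) * (f (x + s) - f x) := by ring

lemma pow_mul_sub_le_pow_mul_sub (hC : 0 ≤ C)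
    (hL : ∀ x h, 0 < h → f x - f (x - h) ≤ C * (f (x + h) - f x))
    (k : ℕ) (x : ℝ) {s : ℝ} (hs : 0 < s) :
    (C + 1) ^ k * (f (x + s) - f x) ≤ C ^ k * (f (x + 2 ^ k * s) - f x) := by
  induction k generalizing s with
  | zero => simp
  | succ k ih =>
    have h2 := hL (x + s) s hs
    rw [add_sub_cancel_right, add_assoc, ← two_mul] at h2
    calc (C + 1) ^ (k + 1) * (f (x + s) - f x)
        = (C + 1) ^ k * ((C + 1) * (f (x + s) - f x)) := by ring
      _ ≤ (C + 1) ^ k * (C * (f (x + 2 * s) - f x)) :=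
          mul_le_mul_of_nonneg_left (by linarith) (by positivity)
      _ = C * ((C + 1) ^ k * (f (x + 2 * s) - f x)) := by ring
      _ ≤ C * (C ^ k * (f (x + 2 ^ k * (2 * s)) - f x)) :=
          mul_le_mul_of_nonneg_left (ih (by positivity)) hC
      _ = C ^ (k + 1) * (f (x + 2 ^ (k + 1) * s) - f x) := by ring_nf

lemma two_pow_rpow_logb (k : ℕ) {y : ℝ} (hy : 0 < y) : ((2 : ℝ) ^ k) ^ logb 2 y = y ^ k := by
  rw [← rpow_natCast, ← rpow_mul zero_le_two, mul_comm, rpow_mul zero_le_two,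
    rpow_logb zero_lt_two (by norm_num) hy, rpow_natCast]

lemma sub_le_two_mul_rpow_mul_sub (hf : Monotone f) (hC : 1 ≤ C)
    (hL : ∀ x h, 0 < h → f x - f (x - h) ≤ C * (f (x + h) - f x))
    (x : ℝ) {s r : ℝ} (hs : 0 < s) (hsr : s ≤ r) :
    f (x + s) - f x ≤ 2 * (s / r) ^ logb 2 ((C + 1) / C) * (f (x + r) - f x) := by
  set a := logb 2 ((C + 1) / C)
  have ha : 0 ≤ a := logb_nonneg one_lt_two ((one_le_div (by linarith)).2 (by linarith))
  obtain ⟨k, hk, hk'⟩ := exists_nat_pow_near ((one_le_div hs).2 hsr) one_lt_two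
  have hr : 0 < r := hs.trans_le hsr
  have hdecay : (C + 1) ^ k * (f (x + s) - f x) ≤ C ^ k * (f (x + r) - f x) :=
    (pow_mul_sub_le_pow_mul_sub (by linarith) hL k x hs).trans <|
      mul_le_mul_of_nonneg_left (sub_le_sub_right (hf (by nlinarith [(le_div_iff₀ hs).1 hk])) _)
        (by positivity)
  have hratio : (C / (C + 1)) ^ k ≤ 2 * (s / r) ^ a := by
    have h2k : ((2 : ℝ) ^ k)⁻¹ ≤ 2 * (s / r) := by
      rw [pow_succ, ← div_lt_iff₀ two_pos] at hk'
      rw [inv_le_comm₀ (by positivity) (by positivity)]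
      convert hk'.le using 1
      field_simp
    calc (C / (C + 1)) ^ k = ((2 : ℝ) ^ k)⁻¹ ^ a := by
          rw [inv_rpow (by positivity), two_pow_rpow_logb k (by positivity), ← inv_pow, inv_div]
      _ ≤ (2 * (s / r)) ^ a := rpow_le_rpow (by positivity) h2k ha
      _ = (C + 1) / C * (s / r) ^ a := by
          rw [mul_rpow zero_le_two (by positivity), rpow_logb zero_lt_two (by norm_num)
            (by positivity)]
      _ ≤ 2 * (s / r) ^ a := by
          gcongr
          rw [div_le_iff₀ (by linarith)]
          linarith
  have hΔ : 0 ≤ f (x + r) - f x := sub_nonneg.2 (hf (by linarith))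
  calc f (x + s) - f x ≤ (C / (C + 1)) ^ k * (f (x + r) - f x) := by
        rw [div_pow, div_mul_eq_mul_div, le_div_iff₀ (by positivity)]
        linarith
    _ ≤ 2 * (s / r) ^ a * (f (x + r) - f x) := mul_le_mul_of_nonneg_right hratio hΔ

lemma sub_le_mul_rpow_mul_sub (hf : Monotone f) (hC : 0 ≤ C)
    (hR : ∀ x h, 0 < h → f (x + h) - f x ≤ C * (f x - f (x - h)))
    (x : ℝ) {s r : ℝ} (hr : 0 < r) (hrs : r ≤ s) :
    f (x + s) - f x ≤ (C + 1) * (s / r) ^ logb 2 (C + 1) * (f (x + r) - f x) := by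
  set b := logb 2 (C + 1)
  have hb : 0 ≤ b := logb_nonneg one_lt_two (by linarith)
  obtain ⟨k, hk, hk'⟩ := exists_nat_pow_near ((one_le_div hr).2 hrs) one_lt_two
  have hΔ : 0 ≤ f (x + r) - f x := sub_nonneg.2 (hf (by linarith))
  calc f (x + s) - f x ≤ f (x + 2 ^ (k + 1) * r) - f x := by
        gcongr; exact hf (by have := (div_lt_iff₀ hr).1 hk'; linarith)
    _ ≤ (C + 1) ^ (k + 1) * (f (x + r) - f x) := sub_le_pow_mul_sub hC hR _ x hr
    _ = (C + 1) * ((2 : ℝ) ^ k) ^ b * (f (x + r) - f x) := by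
        rw [two_pow_rpow_logb k (by linarith), pow_succ']
    _ ≤ (C + 1) * (s / r) ^ b * (f (x + r) - f x) := by gcongr

lemma abs_sub_le_mul_sub_and_sub_le_mul_abs (hf : Monotone f) (hC : 1 ≤ C)
    (hR : ∀ x h, 0 < h → f (x + h) - f x ≤ C * (f x - f (x - h)))
    (hL : ∀ x h, 0 < h → f x - f (x - h) ≤ C * (f (x + h) - f x)) (x y : ℝ) :
    |f x - f y| ≤ C * (f (x + |x - y|) - f x) ∧ f (x + |x - y|) - f x ≤ C * |f x - f y| := by
  rcases le_or_gt x y with hxy | hxy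
  · rw [abs_of_nonpos (sub_nonpos.2 hxy), abs_of_nonpos (sub_nonpos.2 (hf hxy)),
      show x + -(x - y) = y by ring]
    have := sub_nonneg.2 (hf hxy)
    constructor <;> nlinarith
  · have hs : 0 < x - y := sub_pos.2 hxy
    rw [abs_of_pos hs, abs_of_nonneg (sub_nonneg.2 (hf hxy.le))]
    have hL' := hL x (x - y) hs
    have hR' := hR x (x - y) hs
    rw [sub_sub_cancel] at hL' hR'
    exact ⟨hL', hR'⟩

def qsGauge (C t : ℝ) : ℝ :=
  C ^ 2 * (C + 1) * if t ≤ 1 then t ^ logb 2 ((C + 1) / C) else t ^ logb 2 (C + 1)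

lemma qsGauge_strictMonoOn (hC : 0 < C) : StrictMonoOn (qsGauge C) (Ioi 0) := by
  have ha : 0 < logb 2 ((C + 1) / C) := logb_pos one_lt_two ((one_lt_div hC).2 (by linarith))
  have hb : 0 < logb 2 (C + 1) := logb_pos one_lt_two (by linarith)
  intro t ht u hu htu
  simp only [qsGauge]
  gcongr
  split_ifs with h₁ h₂ h₂
  · exact rpow_lt_rpow (le_of_lt ht) htu ha
  · exact (rpow_le_one (le_of_lt ht) h₁ ha.le).trans_lt (one_lt_rpow (not_le.1 h₂) hb)
  · exact absurd (htu.le.trans h₂) h₁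
  · exact rpow_lt_rpow (le_of_lt ht) htu hb

lemma qsGauge_bijOn (hC : 0 < C) : BijOn (qsGauge C) (Ioi 0) (Ioi 0) := by
  have ha : 0 < logb 2 ((C + 1) / C) := logb_pos one_lt_two ((one_lt_div hC).2 (by linarith))
  have hb : 0 < logb 2 (C + 1) := logb_pos one_lt_two (by linarith)
  have hK : 0 < C ^ 2 * (C + 1) := by positivity
  refine ⟨fun t (ht : 0 < t) => ?_, (qsGauge_strictMonoOn hC).injOn, fun y (hy : 0 < y) => ?_⟩
  · simp only [qsGauge, mem_Ioi]
    split_ifs <;> positivity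
  · have hyK : 0 < y / (C ^ 2 * (C + 1)) := by positivity
    rcases le_or_gt y (C ^ 2 * (C + 1)) with hle | hlt
    · have h1 : (y / (C ^ 2 * (C + 1))) ^ (logb 2 ((C + 1) / C))⁻¹ ≤ 1 :=
        rpow_le_one hyK.le ((div_le_one hK).2 hle) (inv_nonneg.2 ha.le)
      refine ⟨_, rpow_pos_of_pos hyK (logb 2 ((C + 1) / C))⁻¹, ?_⟩
      rw [qsGauge, if_pos h1, rpow_inv_rpow hyK.le ha.ne']
      field_simp
    · have h1 : 1 < (y / (C ^ 2 * (C + 1))) ^ (logb 2 (C + 1))⁻¹ :=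
        one_lt_rpow ((one_lt_div hK).2 hlt) (inv_pos.2 hb)
      refine ⟨_, rpow_pos_of_pos hyK (logb 2 (C + 1))⁻¹, ?_⟩
      rw [qsGauge, if_neg (not_le.2 h1), rpow_inv_rpow hyK.le hb.ne']
      field_simp

theorem abs_sub_le_qsGauge_mul (hf : Monotone f) (hC : 1 ≤ C)
    (hR : ∀ x h, 0 < h → f (x + h) - f x ≤ C * (f x - f (x - h)))
    (hL : ∀ x h, 0 < h → f x - f (x - h) ≤ C * (f (x + h) - f x))
    {x y z : ℝ} (hxy : x ≠ y) (hxz : x ≠ z) :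
    |f x - f y| ≤ qsGauge C (|x - y| / |x - z|) * |f x - f z| := by
  set s := |x - y|
  set r := |x - z|
  have hs : 0 < s := abs_pos.2 (sub_ne_zero.2 hxy)
  have hr : 0 < r := abs_pos.2 (sub_ne_zero.2 hxz)
  obtain ⟨hy, -⟩ := abs_sub_le_mul_sub_and_sub_le_mul_abs hf hC hR hL x y
  obtain ⟨-, hz⟩ := abs_sub_le_mul_sub_and_sub_le_mul_abs hf hC hR hL x z
  have hC0 : 0 ≤ C := by linarith
  rw [qsGauge]
  split_ifs with hsr
  · set p := (s / r) ^ logb 2 ((C + 1) / C)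
    have hratio : f (x + s) - f x ≤ 2 * p * (f (x + r) - f x) :=
      sub_le_two_mul_rpow_mul_sub hf hC hL x hs ((div_le_one hr).1 hsr)
    have hp : 0 ≤ p := by positivity
    calc |f x - f y| ≤ C * (2 * p * (f (x + r) - f x)) :=
          hy.trans (mul_le_mul_of_nonneg_left hratio hC0)
      _ ≤ C * (2 * p * (C * |f x - f z|)) := by gcongr
      _ = C ^ 2 * 2 * p * |f x - f z| := by ring
      _ ≤ C ^ 2 * (C + 1) * p * |f x - f z| := by gcongr; linarith
  · set p := (s / r) ^ logb 2 (C + 1)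
    have hratio : f (x + s) - f x ≤ (C + 1) * p * (f (x + r) - f x) :=
      sub_le_mul_rpow_mul_sub hf hC0 hR x hr ((one_le_div hr).1 (not_le.1 hsr).le)
    calc |f x - f y| ≤ C * ((C + 1) * p * (f (x + r) - f x)) :=
          hy.trans (mul_le_mul_of_nonneg_left hratio hC0)
      _ ≤ C * ((C + 1) * p * (C * |f x - f z|)) := by gcongr
      _ = C ^ 2 * (C + 1) * p * |f x - f z| := by ring

end Quasisymmetry

lemma sq_intervalIntegral_le {g : ℝ → ℝ} {a b : ℝ} (hab : a ≤ b) (hg : Continuous g) :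
    (∫ x in a..b, g x) ^ 2 ≤ (b - a) * ∫ x in a..b, g x ^ 2 := by
  rcases hab.eq_or_lt with rfl | hab'
  · simp
  set I := ∫ x in a..b, g x
  set m := I / (b - a)
  have hpt : ∫ x in a..b, (2 * m * g x - m ^ 2) ≤ ∫ x in a..b, g x ^ 2 :=
    intervalIntegral.integral_mono_on hab ((by fun_prop : Continuous _).intervalIntegrable _ _)
      ((by fun_prop : Continuous _).intervalIntegrable _ _)
      fun x _ => by nlinarith [sq_nonneg (g x - m)]
  rw [intervalIntegral.integral_sub ((by fun_prop : Continuous _).intervalIntegrable _ _)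
      intervalIntegrable_const, intervalIntegral.integral_const_mul,
    intervalIntegral.integral_const, smul_eq_mul] at hpt
  have hI : I = m * (b - a) := (div_mul_cancel₀ I (sub_pos.2 hab').ne').symm
  rw [show I ^ 2 = (b - a) * (2 * m * I - (b - a) * m ^ 2) by rw [hI]; ring]
  exact mul_le_mul_of_nonneg_left hpt (sub_nonneg.2 hab)

lemma exists_cell_subset_dyadic {n : ℤ} (hn : n ≤ 0) (j : ℤ) :
    ∃ (m : ℕ) (k : ℤ), (2 : ℝ) ^ n * j ≤ k / 4 ^ m ∧ (k + 1) / 4 ^ m ≤ (2 : ℝ) ^ n * (j + 1) ∧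
      (2 : ℝ) ^ n * (j + 1) - 2 ^ n * j ≤ 2 / 4 ^ m := by
  obtain ⟨m, hm | hm⟩ : ∃ m : ℕ, n = -((2 * m : ℕ) : ℤ) ∨ n = -((2 * m + 1 : ℕ) : ℤ) :=
    ⟨(-n).toNat / 2, by omega⟩
  · have h2 : (2 : ℝ) ^ n = 1 / 4 ^ m := by
      rw [hm, zpow_neg, zpow_natCast, pow_mul]; norm_num
    refine ⟨m, j, ?_, ?_, ?_⟩ <;> rw [h2] <;> field_simp <;> norm_num
  · have h2 : (2 : ℝ) ^ n = 2 / 4 ^ (m + 1) := by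
      rw [hm, zpow_neg, zpow_natCast, pow_succ, pow_mul]; norm_num; ring
    refine ⟨m + 1, 2 * j, ?_, ?_, ?_⟩ <;> rw [h2] <;> push_cast <;> field_simp <;> linarith

namespace SelfSimilar

def weight (k : ℤ) : ℝ := if k % 4 = 0 ∨ k % 4 = 3 then 1 / 8 else 3 / 8

/-- The value of `cdf` at `k / 4`. -/
def node (k : ℤ) : ℝ :=
  (k / 4 : ℤ) + if k % 4 = 0 then 0 else if k % 4 = 1 then 1 / 8 else if k % 4 = 2 then 1 / 2
    else 7 / 8

lemma weight_pos (k : ℤ) : 0 < weight k := by unfold weight; split_ifs <;> norm_num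

lemma weight_le (k : ℤ) : weight k ≤ 3 / 8 := by unfold weight; split_ifs <;> norm_num

lemma le_weight (k : ℤ) : 1 / 8 ≤ weight k := by unfold weight; split_ifs <;> norm_num

lemma weight_emod_four (k : ℤ) : weight (k % 4) = weight k := by
  simp [weight]

lemma weight_neg_sub_one (k : ℤ) : weight (-k - 1) = weight k := by
  have : (-k - 1) % 4 = 3 - k % 4 := by omega
  simp only [weight, this]
  split_ifs <;> first | rfl | omega

lemma weight_add_four (k : ℤ) : weight (k + 4) = weight k := by
  simp only [weight, show (k + 4) % 4 = k % 4 by omega]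

lemma node_add_four (k : ℤ) : node (k + 4) = node k + 1 := by
  simp only [node, show (k + 4) / 4 = k / 4 + 1 by omega, show (k + 4) % 4 = k % 4 by omega]
  push_cast; ring

lemma node_succ (k : ℤ) : node (k + 1) = node k + weight k := by
  rcases (by omega : k % 4 = 0 ∨ k % 4 = 1 ∨ k % 4 = 2 ∨ k % 4 = 3) with h | h | h | h <;>
  · simp only [node, weight, h, show (k + 1) % 4 = (k % 4 + 1) % 4 by omega,
      show (k + 1) / 4 = k / 4 + (k % 4 + 1) / 4 by omega]
    norm_num <;> ring

lemma node_neg (k : ℤ) : node (-k) = -node k := by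
  rcases (by omega : k % 4 = 0 ∨ k % 4 = 1 ∨ k % 4 = 2 ∨ k % 4 = 3) with h | h | h | h <;>
  · simp only [node, h, show (-k) % 4 = (4 - k % 4) % 4 by omega,
      show (-k) / 4 = -(k / 4) - (if k % 4 = 0 then 0 else 1) by split_ifs <;> omega]
    norm_num <;> ring

lemma node_monotone : Monotone node :=
  monotone_int_of_le_succ fun k => by rw [node_succ]; linarith [weight_pos k]

lemma abs_node_sub_le (k : ℤ) : |node k - k / 4| ≤ 1 / 8 := by
  have hk : (k : ℝ) = 4 * (k / 4 : ℤ) + (k % 4 : ℤ) := by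
    exact_mod_cast (Int.mul_ediv_add_emod k 4).symm
  rcases (by omega : k % 4 = 0 ∨ k % 4 = 1 ∨ k % 4 = 2 ∨ k % 4 = 3) with h | h | h | h <;>
  · rw [hk, node, h, abs_le]; constructor <;> norm_num <;> linarith

def step (u : ℝ → ℝ) (x : ℝ) : ℝ := node ⌊4 * x⌋ + weight ⌊4 * x⌋ * u (Int.fract (4 * x))

section Step

variable {u : ℝ → ℝ}

lemma step_add_one (x : ℝ) : step u (x + 1) = step u x + 1 := by
  have h : 4 * (x + 1) = 4 * x + (4 : ℤ) := by push_cast; ring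
  simp only [step, h, Int.floor_add_intCast, Int.fract_add_intCast, node_add_four,
    weight_add_four]
  ring

lemma step_quarter (hu0 : u 0 = 0) (hu1 : u 1 = 1) (k : ℤ) {t : ℝ} (ht : t ∈ Icc 0 1) :
    step u ((k + t) / 4) = node k + weight k * u t := by
  rw [step, mul_div_cancel₀ _ four_ne_zero]
  rcases ht.2.lt_or_eq with ht1 | rfl
  · have hfl : ⌊(k : ℝ) + t⌋ = k := by
      rw [Int.floor_intCast_add, Int.floor_eq_zero_iff.2 ⟨ht.1, ht1⟩, add_zero]
    rw [hfl, ← Int.self_sub_floor, hfl, add_sub_cancel_left]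
  · rw [show (k : ℝ) + 1 = (k + 1 : ℤ) by push_cast; ring, Int.floor_intCast, Int.fract_intCast,
      hu0, hu1, node_succ]
    ring

lemma step_odd (hodd : Function.Odd u) (hu : ∀ x, u (x + 1) = u x + 1) :
    Function.Odd (step u) := by
  have hu0 : u 0 = 0 := hodd.map_zero
  have hu1 : u 1 = 1 := by simpa [hu0] using hu 0
  intro x
  set k := ⌊4 * x⌋
  set t := Int.fract (4 * x)
  have hx : -x = ((-k - 1 : ℤ) + (1 - t)) / 4 := by
    simp only [t, k, ← Int.self_sub_floor]; push_cast; ring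
  have ht : 1 - t ∈ Icc (0 : ℝ) 1 :=
    ⟨by linarith [Int.fract_lt_one (4 * x)], by linarith [Int.fract_nonneg (4 * x)]⟩
  rw [hx, step_quarter hu0 hu1 _ ht, weight_neg_sub_one, show -k - 1 = -(k + 1) by ring,
    node_neg, node_succ, sub_eq_neg_add, hu, hodd, step]
  ring

lemma step_monotone (hu : Monotone u) (hu0 : u 0 = 0) (hu1 : u 1 = 1) : Monotone (step u) := by
  intro x y hxy
  have hk : ⌊4 * x⌋ ≤ ⌊4 * y⌋ := Int.floor_le_floor (by linarith)
  rcases hk.eq_or_lt with hk | hk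
  · simp only [step, hk]
    gcongr
    · exact (weight_pos _).le
    · apply hu
      simp only [← Int.self_sub_floor, hk]
      linarith
  · have h1 : u (Int.fract (4 * x)) ≤ 1 := hu1 ▸ hu (Int.fract_lt_one _).le
    have h2 : 0 ≤ u (Int.fract (4 * y)) := hu0 ▸ hu (Int.fract_nonneg _)
    have h3 : node (⌊4 * x⌋ + 1) ≤ node ⌊4 * y⌋ := node_monotone hk
    rw [node_succ] at h3
    simp only [step]
    nlinarith [weight_pos ⌊4 * x⌋, weight_pos ⌊4 * y⌋]

lemma abs_step_sub_step_le {v : ℝ → ℝ} {ε : ℝ} (h : ∀ x, |u x - v x| ≤ ε) (x : ℝ) :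
    |step u x - step v x| ≤ 3 / 8 * ε := by
  rw [step, step, add_sub_add_left_eq_sub, ← mul_sub, abs_mul, abs_of_pos (weight_pos _)]
  exact mul_le_mul (weight_le _) (h _) (abs_nonneg _) (by norm_num)

lemma abs_step_id_sub_le (x : ℝ) : |step id x - x| ≤ 1 / 4 := by
  have hx : x = (⌊4 * x⌋ + Int.fract (4 * x)) / 4 := by rw [Int.floor_add_fract]; ring
  have hnode := abs_le.1 (abs_node_sub_le ⌊4 * x⌋)
  have ht := Int.fract_nonneg (4 * x)
  have ht' := Int.fract_lt_one (4 * x)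
  have hw := weight_le ⌊4 * x⌋
  have hw' := le_weight ⌊4 * x⌋
  rw [step, id, abs_le]
  constructor <;> nlinarith

end Step

def approx (n : ℕ) : ℝ → ℝ := step^[n] id

lemma approx_succ (n : ℕ) : approx (n + 1) = step (approx n) :=
  Function.iterate_succ_apply' _ _ _

lemma approx_add_one (n : ℕ) (x : ℝ) : approx n (x + 1) = approx n x + 1 := by
  cases n with
  | zero => rfl
  | succ n => rw [approx_succ, step_add_one]

lemma approx_odd (n : ℕ) : Function.Odd (approx n) := by
  induction n with
  | zero => exact fun _ => rfl
  | succ n ih => rw [approx_succ]; exact step_odd ih (approx_add_one n)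

lemma approx_zero_right (n : ℕ) : approx n 0 = 0 := (approx_odd n).map_zero

lemma approx_one_right (n : ℕ) : approx n 1 = 1 := by
  simpa [approx_zero_right] using approx_add_one n 0

lemma approx_monotone (n : ℕ) : Monotone (approx n) := by
  induction n with
  | zero => exact monotone_id
  | succ n ih =>
    rw [approx_succ]; exact step_monotone ih (approx_zero_right n) (approx_one_right n)

lemma approx_quarter (n : ℕ) (k : ℤ) {t : ℝ} (ht : t ∈ Icc 0 1) :
    approx (n + 1) ((k + t) / 4) = node k + weight k * approx n t := by
  rw [approx_succ, step_quarter (approx_zero_right n) (approx_one_right n) k ht]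

lemma dist_approx_succ_le (n : ℕ) (x : ℝ) :
    dist (approx n x) (approx (n + 1) x) ≤ 1 / 4 * (3 / 8) ^ n := by
  rw [dist_comm, Real.dist_eq]
  induction n generalizing x with
  | zero => rw [approx_succ, pow_zero, mul_one]; exact abs_step_id_sub_le x
  | succ n ih =>
    have := abs_step_sub_step_le ih x
    rw [← approx_succ, ← approx_succ] at this
    rw [pow_succ]
    linarith

def cdf (x : ℝ) : ℝ := limUnder atTop fun n => approx n x

lemma tendsto_approx (x : ℝ) : Tendsto (fun n => approx n x) atTop (nhds (cdf x)) :=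
  (cauchySeq_of_le_geometric _ _ (by norm_num) (dist_approx_succ_le · x)).tendsto_limUnder

lemma cdf_add_one (x : ℝ) : cdf (x + 1) = cdf x + 1 :=
  tendsto_nhds_unique (tendsto_approx (x + 1)) <| by
    simpa only [approx_add_one] using (tendsto_approx x).add_const 1

lemma cdf_odd : Function.Odd cdf := fun x =>
  tendsto_nhds_unique (tendsto_approx (-x)) <| by
    simpa only [approx_odd _ x] using (tendsto_approx x).neg

lemma cdf_monotone : Monotone cdf := fun _ _ hxy =>
  le_of_tendsto_of_tendsto' (tendsto_approx _) (tendsto_approx _) fun n => approx_monotone n hxy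

lemma cdf_quarter (k : ℤ) {t : ℝ} (ht : t ∈ Icc 0 1) :
    cdf ((k + t) / 4) = node k + weight k * cdf t :=
  tendsto_nhds_unique ((tendsto_approx _).comp (tendsto_add_atTop_nat 1)) <| by
    simpa only [Function.comp_def, approx_quarter _ k ht] using
      ((tendsto_approx t).const_mul (weight k)).const_add (node k)

lemma cdf_zero : cdf 0 = 0 := cdf_odd.map_zero

lemma cdf_add_intCast (x : ℝ) (j : ℤ) : cdf (x + j) = cdf x + j := by
  induction j using Int.induction_on with
  | zero => simp
  | succ j ih => rw [Int.cast_add, Int.cast_one, ← add_assoc, cdf_add_one, ih]; ring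
  | pred j ih =>
    have := cdf_add_one (x + (-j - 1 : ℤ))
    rw [show x + ((-j - 1 : ℤ) : ℝ) + 1 = x + (-j : ℤ) by push_cast; ring, ih] at this
    push_cast at this ⊢
    linarith

lemma cdf_intCast (j : ℤ) : cdf j = j := by simpa [cdf_zero] using cdf_add_intCast 0 j

/-- The mass of the 4-adic interval `[j / 4 ^ n, (j + 1) / 4 ^ n]`. -/
def cellMass : ℕ → ℤ → ℝ
  | 0, _ => 1
  | n + 1, j => cellMass n (j / 4) * weight j

lemma cellMass_pos (n : ℕ) (j : ℤ) : 0 < cellMass n j := by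
  induction n generalizing j with
  | zero => exact one_pos
  | succ n ih => exact mul_pos (ih _) (weight_pos j)

lemma cellMass_le_pow (n : ℕ) (j : ℤ) : cellMass n j ≤ (3 / 8) ^ n := by
  induction n generalizing j with
  | zero => exact le_rfl
  | succ n ih =>
    rw [cellMass, pow_succ]
    exact mul_le_mul (ih _) (weight_le j) (weight_pos j).le (by positivity)

lemma cellMass_adjacent_le (n : ℕ) (j : ℤ) :
    cellMass n (j + 1) ≤ 3 * cellMass n j ∧ cellMass n j ≤ 3 * cellMass n (j + 1) := by
  induction n generalizing j with
  | zero => norm_num [cellMass]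
  | succ n ih =>
    simp only [cellMass]
    by_cases h : j % 4 = 3
    · have hw : weight (j + 1) = weight j := by
        simp [weight, h, show (j + 1) % 4 = 0 by omega]
      rw [show (j + 1) / 4 = j / 4 + 1 by omega, hw]
      obtain ⟨h₁, h₂⟩ := ih (j / 4)
      constructor <;> nlinarith [weight_pos j]
    · rw [show (j + 1) / 4 = j / 4 by omega]
      have := cellMass_pos n (j / 4)
      constructor <;> nlinarith [weight_le j, le_weight j, weight_le (j + 1), le_weight (j + 1)]

lemma cellMass_ediv_sixteen_le (n : ℕ) (k : ℤ) : cellMass n (k / 16) ≤ 64 * cellMass (n + 2) k := by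
  simp only [cellMass, show k / 4 / 4 = k / 16 by omega]
  have hw : 1 / 8 * (1 / 8) ≤ weight (k / 4) * weight k :=
    mul_le_mul (le_weight _) (le_weight _) (by norm_num) (weight_pos _).le
  nlinarith [cellMass_pos n (k / 16)]

lemma cdf_cell (n : ℕ) (j : ℤ) {t : ℝ} (ht : t ∈ Icc 0 1) :
    cdf ((j + t) / 4 ^ n) = cdf (j / 4 ^ n) + cellMass n j * cdf t := by
  induction n generalizing j t with
  | zero => simp [cellMass, add_comm (j : ℝ), cdf_add_intCast, cdf_intCast]
  | succ n ih =>
    have hr : ((j % 4 : ℤ) : ℝ) ∈ Icc 0 3 := by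
      constructor <;> exact_mod_cast (by omega)
    have hparent : ∀ u ∈ Icc (0 : ℝ) 1, cdf ((j + u) / 4 ^ (n + 1)) =
        cdf ((j / 4 : ℤ) / 4 ^ n) + cellMass n (j / 4) * (node (j % 4) + weight j * cdf u) := by
      intro u hu
      have hmem : (((j % 4 : ℤ) : ℝ) + u) / 4 ∈ Icc (0 : ℝ) 1 :=
        ⟨by linarith [hr.1, hu.1], by linarith [hr.2, hu.2]⟩
      have harg : ((j : ℝ) + u) / 4 ^ (n + 1) = ((j / 4 : ℤ) + ((j % 4 : ℤ) + u) / 4) / 4 ^ n := by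
        have hj : (j : ℝ) = 4 * (j / 4 : ℤ) + (j % 4 : ℤ) := by
          exact_mod_cast (Int.mul_ediv_add_emod j 4).symm
        rw [hj, pow_succ]
        field_simp
        ring
      rw [harg, ih _ hmem, cdf_quarter _ hu, weight_emod_four]
    have h0 := hparent 0 ⟨le_rfl, zero_le_one⟩
    rw [add_zero, cdf_zero, mul_zero, add_zero] at h0
    rw [hparent t ht, h0, cellMass]
    ring

lemma cdf_cell_right (n : ℕ) (j : ℤ) :
    cdf ((j + 1) / 4 ^ n) = cdf (j / 4 ^ n) + cellMass n j := by
  rw [cdf_cell n j ⟨zero_le_one, le_rfl⟩, ← Int.cast_one, cdf_intCast, Int.cast_one, mul_one]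

lemma cdf_sub_le_cellMass_add {n : ℕ} {j : ℤ} {a b : ℝ} (ha : (j : ℝ) ≤ 4 ^ n * a)
    (hb : 4 ^ n * b ≤ j + 2) : cdf b - cdf a ≤ cellMass n j + cellMass n (j + 1) := by
  have h4 : (0 : ℝ) < 4 ^ n := by positivity
  have h₁ := cdf_cell_right n j
  have h₂ := cdf_cell_right n (j + 1)
  rw [Int.cast_add, Int.cast_one, add_assoc, one_add_one_eq_two] at h₂
  have := cdf_monotone (show (j : ℝ) / 4 ^ n ≤ a by rw [div_le_iff₀ h4]; linarith)
  have := cdf_monotone (show b ≤ (j + 2) / 4 ^ n by rw [le_div_iff₀ h4]; linarith)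
  linarith

lemma cellMass_le_cdf_sub {n : ℕ} {j : ℤ} {a b : ℝ} (ha : 4 ^ n * a ≤ j)
    (hb : (j : ℝ) + 1 ≤ 4 ^ n * b) : cellMass n j ≤ cdf b - cdf a := by
  have h4 : (0 : ℝ) < 4 ^ n := by positivity
  have := cdf_cell_right n j
  have := cdf_monotone (show a ≤ (j : ℝ) / 4 ^ n by rw [le_div_iff₀ h4]; linarith)
  have := cdf_monotone (show (j + 1) / 4 ^ n ≤ b by rw [div_le_iff₀ h4]; linarith)
  linarith

lemma cdf_continuous : Continuous cdf := by
  refine Metric.continuous_iff.2 fun x ε hε => ?_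
  obtain ⟨n, hn⟩ := exists_pow_lt_of_lt_one (half_pos hε) (by norm_num : (3 / 8 : ℝ) < 1)
  have h4 : (0 : ℝ) < 4 ^ n := by positivity
  have hclose : ∀ a b, a ≤ b → b - a < 1 / 4 ^ n → |cdf b - cdf a| < ε := by
    intro a b hab hba
    rw [lt_div_iff₀ h4] at hba
    have := cdf_sub_le_cellMass_add (b := b) (Int.floor_le (4 ^ n * a))
      (by linarith [Int.lt_floor_add_one (4 ^ n * a)])
    rw [abs_of_nonneg (sub_nonneg.2 (cdf_monotone hab))]
    linarith [cellMass_le_pow n ⌊4 ^ n * a⌋, cellMass_le_pow n (⌊4 ^ n * a⌋ + 1)]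
  refine ⟨1 / 4 ^ n, by positivity, fun y hy => ?_⟩
  rw [Real.dist_eq, abs_lt] at hy
  rw [Real.dist_eq]
  rcases le_total x y with h | h
  · exact hclose x y h (by linarith)
  · rw [abs_sub_comm]; exact hclose y x h (by linarith)

lemma cdf_strictMono : StrictMono cdf := by
  intro x y hxy
  obtain ⟨n, hn⟩ := pow_unbounded_of_one_lt (2 / (y - x)) (by norm_num : (1 : ℝ) < 4)
  rw [div_lt_iff₀ (sub_pos.2 hxy)] at hn
  have := cellMass_le_cdf_sub (b := y) (Int.le_ceil (4 ^ n * x))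
    (by linarith [Int.ceil_lt_add_one (4 ^ n * x)])
  linarith [cellMass_pos n ⌈4 ^ n * x⌉]

lemma cdf_surjective : Function.Surjective cdf := by
  refine cdf_continuous.surjective (tendsto_atTop_mono (fun x => ?_)
    (tendsto_atTop_add_const_right _ (-1) tendsto_id))
    (tendsto_atBot_mono (fun x => ?_) (tendsto_atBot_add_const_right _ 1 tendsto_id))
  · have := cdf_monotone (Int.floor_le x)
    rw [cdf_intCast] at this
    linarith [Int.lt_floor_add_one x, id_eq x]
  · have := cdf_monotone (Int.le_ceil x)
    rw [cdf_intCast] at this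
    linarith [Int.ceil_lt_add_one x, id_eq x]

/- `[x, x + h]` is covered by two adjacent 4-adic intervals of length `4⁻ⁿ ≥ h`, and `[x - h, x]`
contains a 4-adic interval of length `4⁻ⁿ⁻²` whose parent of length `4⁻ⁿ` is the first of those two
or its left neighbour; hence `768 = 4 * 3 * 64`. -/
lemma cdf_add_sub_cdf_le_mul_of_lt_one {x h : ℝ} (hh : 0 < h) (h1 : h < 1) :
    cdf (x + h) - cdf x ≤ 768 * (cdf x - cdf (x - h)) := by
  obtain ⟨n, hn, hn'⟩ := exists_nat_pow_near ((one_le_div hh).2 h1.le) (by norm_num : (1 : ℝ) < 4)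
  rw [le_div_iff₀ hh] at hn
  rw [div_lt_iff₀ hh, pow_succ] at hn'
  have h16 : (4 : ℝ) ^ (n + 2) = 16 * 4 ^ n := by ring
  set N : ℝ := 4 ^ n
  set j := ⌊N * x⌋
  set k := ⌈16 * N * (x - h)⌉
  have hj : (j : ℝ) ≤ N * x := Int.floor_le _
  have hj' : N * x < j + 1 := Int.lt_floor_add_one _
  have hk : 16 * N * (x - h) ≤ k := Int.le_ceil _
  have hk' : (k : ℝ) < 16 * N * (x - h) + 1 := Int.ceil_lt_add_one _
  have hcover : cdf (x + h) - cdf x ≤ cellMass n j + cellMass n (j + 1) :=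
    cdf_sub_le_cellMass_add hj (by linarith)
  have hinner : cellMass (n + 2) k ≤ cdf x - cdf (x - h) :=
    cellMass_le_cdf_sub (by rw [h16]; exact hk) (by rw [h16]; linarith)
  have hparent : k / 16 = j ∨ k / 16 = j - 1 := by
    have hlt : k < 16 * (j + 1) := by
      have : (k : ℝ) < 16 * (j + 1) := by linarith
      exact_mod_cast this
    have hge : 16 * (j - 1) ≤ k := by
      have : 16 * ((j : ℝ) - 1) ≤ k := by linarith
      exact_mod_cast this
    omega
  have hj3 : cellMass n j ≤ 3 * cellMass n (k / 16) := by
    rcases hparent with hq | hq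
    · rw [hq]; linarith [cellMass_pos n j]
    · simpa [hq] using (cellMass_adjacent_le n (j - 1)).1
  linarith [(cellMass_adjacent_le n j).1, cellMass_ediv_sixteen_le n k]

lemma cdf_add_sub_cdf_le_two_mul_of_one_le {x h : ℝ} (h1 : 1 ≤ h) :
    cdf (x + h) - cdf x ≤ 2 * (cdf x - cdf (x - h)) := by
  have hup := cdf_monotone (show x + h ≤ x + ⌈h⌉ by linarith [Int.le_ceil h])
  have hlow := cdf_monotone (show x - h ≤ x + (-⌊h⌋ : ℤ) by push_cast; linarith [Int.floor_le h])
  rw [cdf_add_intCast] at hup hlow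
  have hfl : (1 : ℝ) ≤ ⌊h⌋ := by exact_mod_cast Int.le_floor.2 (by exact_mod_cast h1)
  have hcf : (⌈h⌉ : ℝ) ≤ ⌊h⌋ + 1 := by exact_mod_cast Int.ceil_le_floor_add_one h
  push_cast at hlow
  linarith

lemma cdf_add_sub_cdf_le_mul (x : ℝ) {h : ℝ} (hh : 0 < h) :
    cdf (x + h) - cdf x ≤ 768 * (cdf x - cdf (x - h)) := by
  rcases lt_or_ge h 1 with h1 | h1
  · exact cdf_add_sub_cdf_le_mul_of_lt_one hh h1
  · have := cdf_add_sub_cdf_le_two_mul_of_one_le (x := x) h1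
    linarith [cdf_monotone (show x - h ≤ x by linarith)]

lemma cdf_sub_cdf_sub_le_mul (x : ℝ) {h : ℝ} (hh : 0 < h) :
    cdf x - cdf (x - h) ≤ 768 * (cdf (x + h) - cdf x) := by
  have := cdf_add_sub_cdf_le_mul (-x) hh
  rw [show -x + h = -(x - h) by ring, show -x - h = -(x + h) by ring, cdf_odd, cdf_odd,
    cdf_odd] at this
  linarith

lemma intervalIntegral_cell (n : ℕ) (j : ℤ) (φ : ℝ → ℝ → ℝ) :
    ∫ x in j / 4 ^ n..(j + 1) / 4 ^ n, φ x (cdf x) =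
      (∫ t in 0..1, φ ((j + t) / 4 ^ n) (cdf (j / 4 ^ n) + cellMass n j * cdf t)) / 4 ^ n := by
  have h := intervalIntegral.inv_smul_integral_comp_div_add (a := 0) (b := 1)
    (fun x => φ x (cdf x)) (4 ^ n : ℝ) (j / 4 ^ n)
  rw [zero_div, zero_add, ← add_div, add_comm 1] at h
  rw [← h, smul_eq_mul, inv_mul_eq_div]
  congr 1
  refine intervalIntegral.integral_congr fun t ht => ?_
  rw [uIcc_of_le zero_le_one] at ht
  simp only [← add_div, add_comm t, cdf_cell n j ht]

lemma integral_cdf_zero_one : ∫ x in (0 : ℝ)..1, cdf x = 1 / 2 := by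
  have h := intervalIntegral.integral_comp_sub_left (a := 0) (b := 1) cdf 1
  simp only [sub_self, sub_zero] at h
  have hsymm : ∀ x, cdf (1 - x) = 1 - cdf x := fun x => by
    rw [sub_eq_neg_add, cdf_add_one, cdf_odd]; ring
  simp only [hsymm] at h
  rw [intervalIntegral.integral_sub (by simp) (cdf_continuous.intervalIntegrable _ _)] at h
  simp at h
  linarith

lemma integral_affine_cdf (c₀ c₁ c₂ : ℝ) :
    ∫ t in (0 : ℝ)..1, (c₀ + c₁ * cdf t + c₂ * t) = c₀ + c₁ / 2 + c₂ / 2 := by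
  have hc : Continuous cdf := cdf_continuous
  rw [intervalIntegral.integral_add ((by fun_prop : Continuous _).intervalIntegrable _ _)
      ((by fun_prop : Continuous _).intervalIntegrable _ _),
    intervalIntegral.integral_add intervalIntegrable_const
      ((by fun_prop : Continuous _).intervalIntegrable _ _),
    intervalIntegral.integral_const_mul, intervalIntegral.integral_const_mul, integral_id,
    integral_cdf_zero_one]
  norm_num
  ring

lemma integral_quarter_cdf_sub_affine (k : ℤ) (α β : ℝ) :
    ∫ x in k / 4 ^ 1..(k + 1) / 4 ^ 1, (cdf x - (α * x + β)) =
      (node k + weight k / 2 - α * (2 * k + 1) / 8 - β) / 4 := by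
  have hnode : cdf (k / 4 ^ 1) = node k := by
    simpa [cdf_zero] using cdf_quarter k (t := 0) ⟨le_rfl, zero_le_one⟩
  rw [intervalIntegral_cell 1 k fun x y => y - (α * x + β), hnode]
  simp only [cellMass, one_mul, pow_one]
  have hf : (fun t => node k + weight k * cdf t - (α * ((k + t) / 4) + β)) =
      fun t => (node k - α * k / 4 - β) + weight k * cdf t + -α / 4 * t := by
    funext t; ring
  rw [hf, integral_affine_cdf]
  ring

lemma le_integral_sq_cdf_sub_affine (α β : ℝ) :
    α ^ 2 / 2048 ≤ ∫ x in (0 : ℝ)..1, (cdf x - (α * x + β)) ^ 2 := by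
  have hg : Continuous fun x => (cdf x - (α * x + β)) ^ 2 :=
    (cdf_continuous.sub (by fun_prop)).pow 2
  have hsplit := intervalIntegral.sum_integral_adjacent_intervals (μ := volume)
    (a := fun r : ℕ => ((r : ℤ) : ℝ) / 4 ^ 1) (n := 4) fun k _ => hg.intervalIntegrable _ _
  have hquarter : ∀ r : ℕ, 4 * ((node r + weight r / 2 - α * (2 * r + 1) / 8 - β) / 4) ^ 2 ≤
      ∫ x in ((r : ℤ) : ℝ) / 4 ^ 1..(((r + 1 : ℕ) : ℤ) : ℝ) / 4 ^ 1, (cdf x - (α * x + β)) ^ 2 := by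
    intro r
    have := sq_intervalIntegral_le (g := fun x => cdf x - (α * x + β))
      (a := ((r : ℤ) : ℝ) / 4 ^ 1) (b := ((r : ℤ) + 1) / 4 ^ 1) (by gcongr; linarith)
      (cdf_continuous.sub (by fun_prop))
    rw [integral_quarter_cdf_sub_affine] at this
    push_cast at this ⊢
    linarith
  have hsum := Finset.sum_le_sum fun r (_ : r ∈ Finset.range 4) => hquarter r
  rw [hsplit] at hsum
  norm_num [Finset.sum_range_succ, node, weight] at hsum
  nlinarith [sq_nonneg (β - 1 / 2 + α / 2), sq_nonneg (α - 192 / 159)]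

lemma le_integral_cell_sq_cdf_sub_affine (n : ℕ) (j : ℤ) (α β : ℝ) :
    α ^ 2 / (2048 * (4 ^ n) ^ 3) ≤
      ∫ x in j / 4 ^ n..(j + 1) / 4 ^ n, (cdf x - (α * x + β)) ^ 2 := by
  set M := cellMass n j
  have hM : 0 < M := cellMass_pos n j
  have h4 : (0 : ℝ) < 4 ^ n := by positivity
  set α' := α / (4 ^ n * M)
  set β' := (α * j / 4 ^ n + β - cdf (j / 4 ^ n)) / M
  have hscale : (fun t => (cdf (j / 4 ^ n) + M * cdf t - (α * ((j + t) / 4 ^ n) + β)) ^ 2) =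
      fun t => M ^ 2 * (cdf t - (α' * t + β')) ^ 2 := by
    funext t
    simp only [α', β']
    field_simp
    ring
  rw [intervalIntegral_cell n j fun x y => (y - (α * x + β)) ^ 2, hscale,
    intervalIntegral.integral_const_mul, le_div_iff₀ h4]
  calc α ^ 2 / (2048 * (4 ^ n) ^ 3) * 4 ^ n = M ^ 2 * (α' ^ 2 / 2048) := by
        simp only [α']; field_simp
    _ ≤ _ := mul_le_mul_of_nonneg_left (le_integral_sq_cdf_sub_affine α' β') (by positivity)

lemma le_setAverage_sq {u v : ℝ} {m : ℕ} {k : ℤ} (hu : u ≤ k / 4 ^ m) (hv : (k + 1) / 4 ^ m ≤ v)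
    (huv : v - u ≤ 2 / 4 ^ m) {a : ℝ} (ha : a ≠ 0) (b : ℝ) :
    1 / 16384 ≤ ⨍ x in Icc u v, (cdf x - (a * x + b)) ^ 2 / (|a| * diam (Icc u v)) ^ 2 := by
  have h4 : (0 : ℝ) < 4 ^ m := by positivity
  have hcell : (k : ℝ) / 4 ^ m < (k + 1) / 4 ^ m := by gcongr; linarith
  have huv' : 0 < v - u := by linarith
  have hmono : ∫ x in k / 4 ^ m..(k + 1) / 4 ^ m, (cdf x - (a * x + b)) ^ 2 ≤
      ∫ x in Icc u v, (cdf x - (a * x + b)) ^ 2 := by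
    rw [intervalIntegral.integral_of_le hcell.le, ← integral_Icc_eq_integral_Ioc]
    exact setIntegral_mono_set
      (((cdf_continuous.sub (by fun_prop)).pow 2).integrableOn_Icc)
      (Eventually.of_forall fun _ => sq_nonneg _) (Icc_subset_Icc hu hv).eventuallyLE
  have hcube : (v - u) ^ 2 * (v - u) ≤ 8 / (4 ^ m) ^ 3 := by
    calc (v - u) ^ 2 * (v - u) = (v - u) ^ 3 := by ring
      _ ≤ (2 / 4 ^ m) ^ 3 := by gcongr
      _ = 8 / (4 ^ m) ^ 3 := by ring
  rw [setAverage_eq, measureReal_def, Real.volume_Icc, ENNReal.toReal_ofReal huv'.le,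
    Real.diam_Icc (by linarith), integral_div, smul_eq_mul, mul_pow, sq_abs, inv_mul_eq_div,
    div_div, le_div_iff₀ (by positivity)]
  calc 1 / 16384 * (a ^ 2 * (v - u) ^ 2 * (v - u))
      ≤ 1 / 16384 * (a ^ 2 * (8 / (4 ^ m) ^ 3)) := by
        rw [mul_assoc (a ^ 2)]; gcongr
    _ = a ^ 2 / (2048 * (4 ^ m) ^ 3) := by field_simp; norm_num
    _ ≤ _ := (le_integral_cell_sq_cdf_sub_affine m k a b).trans hmono

lemma le_omegaI_cdf {u v : ℝ} {m : ℕ} {k : ℤ} (hu : u ≤ k / 4 ^ m) (hv : (k + 1) / 4 ^ m ≤ v)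
    (huv : v - u ≤ 2 / 4 ^ m) : 1 / 128 ≤ omegaI cdf (Icc u v) := by
  have : Nonempty {p : ℝ × ℝ // p.1 ≠ 0} := ⟨⟨(1, 0), one_ne_zero⟩⟩
  refine le_ciInf fun A => ?_
  rw [show (1 : ℝ) / 128 = Real.sqrt (1 / 16384) by
    rw [show (1 : ℝ) / 16384 = (1 / 128) ^ 2 by norm_num, Real.sqrt_sq (by norm_num)]]
  exact Real.sqrt_le_sqrt (le_setAverage_sq hu hv huv A.2 _)

end SelfSimilar

end

theorem exists_qs_line_omega_bounded_below :
    ∃ (f : ℝ → ℝ) (η : ℝ → ℝ) (c : ℝ),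
      StrictMono f ∧ Continuous f ∧ Function.Surjective f ∧
      StrictMonoOn η (Set.Ioi 0) ∧ Set.BijOn η (Set.Ioi 0) (Set.Ioi 0) ∧
      (∀ x y z : ℝ, x ≠ y → x ≠ z → y ≠ z →
        |f x - f y| ≤ η (|x - y| / |x - z|) * |f x - f z|) ∧
      0 < c ∧
      ∀ (n : ℤ), n ≤ 0 → ∀ (j : ℤ),
        c ≤ omegaI f (Set.Icc ((2 : ℝ) ^ n * j) ((2 : ℝ) ^ n * (j + 1))) := by
  refine ⟨SelfSimilar.cdf, qsGauge 768, 1 / 128, SelfSimilar.cdf_strictMono,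
    SelfSimilar.cdf_continuous, SelfSimilar.cdf_surjective, qsGauge_strictMonoOn (by norm_num),
    qsGauge_bijOn (by norm_num), fun x y z hxy hxz _ => ?_, by norm_num, fun n hn j => ?_⟩
  · exact abs_sub_le_qsGauge_mul SelfSimilar.cdf_monotone (by norm_num)
      (fun x _ => SelfSimilar.cdf_add_sub_cdf_le_mul x)
      (fun x _ => SelfSimilar.cdf_sub_cdf_sub_le_mul x) hxy hxz
  · obtain ⟨m, k, hu, hv, huv⟩ := exists_cell_subset_dyadic hn j
    exact SelfSimilar.le_omegaI_cdf hu hv huv
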